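/- arXiv:2409.11931 — 4 statements merged into one kernel-verified Lean document; each statement's English description precedes it below -/
import Mathlib

section
/- Let θ1, θ2 ∈ (0, π) with θ1 < θ2, a_1 = e^{iθ1}, a_2 = e^{iθ2}, s_i = sin θ_i, c_i = cos θ_i, and let r2, r5 > 0 with r2 + r5 < 1. Define r4 = (s2 r2)/s1, r1 = (s2 r5)/s1, r0 + r3 = 1 − r1 − r4 − r2 − r5. Then the condition (r0+r3) + a1²·(r1+r4) + a2²·(r2+r5) = 0 holds if and only if θ1 + θ2 = π and r2 + r5 = 1/(4 sin²θ1). -/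
open Real Set

/-!
Write `A = r2 + r5`, so that `r1 + r4 = (sin θ2 / sin θ1) A` and `r0 + r3 = 1 - (r1 + r4) - A`.
Using `e^{2iθ} = cos 2θ + i sin 2θ`, the imaginary part of the condition is
`2 A sin θ2 (cos θ1 + cos θ2)`, which vanishes iff `cos θ1 = cos (π - θ2)`, i.e. `θ1 + θ2 = π`.
Using `1 - cos 2θ = 2 sin² θ`, the real part is `1 - 2 A sin θ2 (sin θ1 + sin θ2)`, which for
`sin θ2 = sin θ1` is `1 - 4 A sin² θ1`.
-/

lemma Complex.exp_mul_I_sq (θ : ℝ) :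
    Complex.exp (θ * Complex.I) ^ 2 =
      (Real.cos (2 * θ) : ℂ) + (Real.sin (2 * θ) : ℂ) * Complex.I := by
  rw [← Complex.exp_nat_mul, Complex.ofReal_cos, Complex.ofReal_sin, ← Complex.exp_mul_I]
  push_cast
  ring_nf

lemma ofReal_add_exp_sq_mul_add_exp_sq_mul_eq_zero_iff (θ1 θ2 x u v : ℝ) :
    (x : ℂ) + Complex.exp (θ1 * Complex.I) ^ 2 * u + Complex.exp (θ2 * Complex.I) ^ 2 * v = 0 ↔
      x + cos (2 * θ1) * u + cos (2 * θ2) * v = 0 ∧ sin (2 * θ1) * u + sin (2 * θ2) * v = 0 := by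
  simp [Complex.ext_iff, Complex.exp_mul_I_sq, -Complex.ofReal_cos, -Complex.ofReal_sin]

lemma cos_add_cos_eq_zero_iff {θ1 θ2 : ℝ} (h1 : θ1 ∈ Icc 0 π) (h2 : θ2 ∈ Icc 0 π) :
    cos θ1 + cos θ2 = 0 ↔ θ1 + θ2 = π := by
  have h2' : π - θ2 ∈ Icc 0 π := ⟨by linarith [h2.2], by linarith [h2.1]⟩
  rw [add_eq_zero_iff_eq_neg, ← cos_pi_sub, injOn_cos.eq_iff h1 h2', eq_sub_iff_add_eq]

theorem stmt4_general (θ1 θ2 : ℝ) (h1 : θ1 ∈ Ioo 0 π) (h2 : θ2 ∈ Ioo 0 π)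
    (r1 r2 r4 r5 r03 : ℝ) (hr2 : 0 < r2) (hr5 : 0 < r5)
    (hr4 : r4 = Real.sin θ2 * r2 / Real.sin θ1)
    (hr1 : r1 = Real.sin θ2 * r5 / Real.sin θ1)
    (hr03 : r03 = 1 - r1 - r4 - r2 - r5) :
    ((r03 : ℂ) + Complex.exp (θ1 * Complex.I) ^ 2 * ((r1 : ℂ) + (r4 : ℂ))
        + Complex.exp (θ2 * Complex.I) ^ 2 * ((r2 : ℂ) + (r5 : ℂ)) = 0)
      ↔ (θ1 + θ2 = π ∧ r2 + r5 = 1 / (4 * Real.sin θ1 ^ 2)) := by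
  have hs1 : 0 < sin θ1 := sin_pos_of_pos_of_lt_pi h1.1 h1.2
  have hs2 : 0 < sin θ2 := sin_pos_of_pos_of_lt_pi h2.1 h2.2
  have hA : 0 < r2 + r5 := add_pos hr2 hr5
  have h14 : r1 + r4 = sin θ2 / sin θ1 * (r2 + r5) := by rw [hr1, hr4]; ring
  have hre : r03 + cos (2 * θ1) * (r1 + r4) + cos (2 * θ2) * (r2 + r5) =
      1 - 2 * sin θ2 * (sin θ1 + sin θ2) * (r2 + r5) := by
    rw [hr03, show 1 - r1 - r4 - r2 - r5 = 1 - (r1 + r4) - (r2 + r5) by ring, h14,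
      cos_two_mul_eq_one_sub, cos_two_mul_eq_one_sub]
    field_simp
    ring
  have him : sin (2 * θ1) * (r1 + r4) + sin (2 * θ2) * (r2 + r5) =
      2 * sin θ2 * (r2 + r5) * (cos θ1 + cos θ2) := by
    rw [h14, sin_two_mul, sin_two_mul]
    field_simp
  rw [← Complex.ofReal_add, ← Complex.ofReal_add, ofReal_add_exp_sq_mul_add_exp_sq_mul_eq_zero_iff,
    hre, him, mul_eq_zero, or_iff_right (by positivity),
    cos_add_cos_eq_zero_iff (Ioo_subset_Icc_self h1) (Ioo_subset_Icc_self h2), and_comm]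
  refine and_congr_right fun hθ => ?_
  have hsin : sin θ2 = sin θ1 := by rw [← sin_pi_sub, ← hθ, add_sub_cancel_right]
  rw [hsin, eq_div_iff (by positivity)]
  constructor <;> intro h <;> linarith

theorem stmt4 (θ1 θ2 : ℝ) (h1 : θ1 ∈ Ioo 0 π) (h2 : θ2 ∈ Ioo 0 π) (hlt : θ1 < θ2)
    (r1 r2 r4 r5 r03 : ℝ) (hr2 : 0 < r2) (hr5 : 0 < r5) (hsum : r2 + r5 < 1)
    (hr4 : r4 = Real.sin θ2 * r2 / Real.sin θ1)
    (hr1 : r1 = Real.sin θ2 * r5 / Real.sin θ1)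
    (hr03 : r03 = 1 - r1 - r4 - r2 - r5) :
    ((r03 : ℂ) + Complex.exp (θ1 * Complex.I) ^ 2 * ((r1 : ℂ) + (r4 : ℂ))
        + Complex.exp (θ2 * Complex.I) ^ 2 * ((r2 : ℂ) + (r5 : ℂ)) = 0)
      ↔ (θ1 + θ2 = π ∧ r2 + r5 = 1 / (4 * Real.sin θ1 ^ 2)) :=
  stmt4_general θ1 θ2 h1 h2 r1 r2 r4 r5 r03 hr2 hr5 hr4 hr1 hr03
end

section
/- Let θ ∈ (π/3, π/2), s = sin θ, c = cos θ, r ∈ (0, 1/(4s²)), and set r2 = r, r5 = 1/(4s²) − r, r0 = 1/2 − 1/(4s²) − c/(4s²) + 2cr, r3 = 1/2 − 1/(4s²) + c/(4s²) − 2cr, and □ = sin(2θ) (coming from θ2 = π − θ). Then the inequality (r2·r5/(r0·r3))·(□²/s²) < 1 holds. -/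
open Real Set

theorem stmt7 (θ r : ℝ) (hθ : θ ∈ Ioo (π / 3) (π / 2))
    (hr : r ∈ Ioo 0 (1 / (4 * Real.sin θ ^ 2)))
    (r2 r5 r0 r3 : ℝ)
    (hr2 : r2 = r)
    (hr5 : r5 = 1 / (4 * Real.sin θ ^ 2) - r)
    (hr0 : r0 = 1 / 2 - 1 / (4 * Real.sin θ ^ 2) - Real.cos θ / (4 * Real.sin θ ^ 2)
        + 2 * Real.cos θ * r)
    (hr3 : r3 = 1 / 2 - 1 / (4 * Real.sin θ ^ 2) + Real.cos θ / (4 * Real.sin θ ^ 2)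
        - 2 * Real.cos θ * r) :
    (r2 * r5 / (r0 * r3)) * (Real.sin (2 * θ) ^ 2 / Real.sin θ ^ 2) < 1 := by
  obtain ⟨hθ1, hθ2⟩ := hθ
  obtain ⟨hra, hrb⟩ := hr
  have hπ := Real.pi_pos
  have hs : Real.sin θ > 0 :=
    Real.sin_pos_of_pos_of_lt_pi (by linarith) (by linarith)
  have hc1 : Real.cos θ > 0 := Real.cos_pos_of_mem_Ioo ⟨by linarith, hθ2⟩
  have hc2 : Real.cos θ < 1 / 2 := by
    have h := Real.cos_lt_cos_of_nonneg_of_le_pi (by positivity : (0:ℝ) ≤ π / 3)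
      (by linarith) hθ1
    rwa [Real.cos_pi_div_three] at h
  set s := Real.sin θ with hsdef
  set c := Real.cos θ with hcdef
  have hpyth : s ^ 2 + c ^ 2 = 1 := Real.sin_sq_add_cos_sq θ
  have hs2 : (0:ℝ) < 4 * s ^ 2 := by positivity
  set A := 1 / (4 * s ^ 2) with hA
  have hA1 : A * (4 * s ^ 2) = 1 := by
    rw [hA]; field_simp
  have hApos : A > 0 := by positivity
  have hsin2 : Real.sin (2 * θ) = 2 * s * c := Real.sin_two_mul θ
  have hr0' : r0 = 1 / 2 - A - c * A + 2 * c * r := by rw [hr0, hA]; ring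
  have hr3' : r3 = 1 / 2 - A + c * A - 2 * c * r := by rw [hr3, hA]; ring
  have hkey : 1 / 2 - A - c * A > 0 := by nlinarith [mul_pos hApos hc1]
  have hkey2 : 1 / 2 - A + c * A > 0 := by nlinarith [mul_pos hApos hc1]
  have hr0pos : r0 > 0 := by rw [hr0']; nlinarith [mul_pos hc1 hra]
  have hr3pos : r3 > 0 := by
    rw [hr3']
    have : c * r < c * A := mul_lt_mul_of_pos_left hrb hc1
    nlinarith
  rw [hr2, hr5, hsin2, div_mul_div_comm,
    div_lt_one (by positivity : (0:ℝ) < r0 * r3 * s ^ 2)]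
  rw [hr0', hr3']
  have hid : (1 / 2 - A - c * A + 2 * c * r) * (1 / 2 - A + c * A - 2 * c * r) * s ^ 2
      - r * (A - r) * (2 * s * c) ^ 2
      = (1 / 2 - A - c * A) * (1 / 2 - A + c * A) * s ^ 2 := by ring
  have hpos := mul_pos (mul_pos hkey hkey2) (by positivity : (0:ℝ) < s ^ 2)
  linarith
end

section
/- Let θ1, θ2 ∈ (0, π) be distinct and set s_i = sin θ_i, c_i = cos θ_i, □ = s1 c2 − c1 s2. Then (s1/s2 ∈ ℚ and □/s2 ∈ ℚ) if and only if (c1 ∈ ℚ, c2 ∈ ℚ, and s1/s2 ∈ ℚ). -/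
open Real Set

theorem stmt8 (θ1 θ2 : ℝ) (h1 : θ1 ∈ Ioo 0 π) (h2 : θ2 ∈ Ioo 0 π) (hne : θ1 ≠ θ2) :
    ((∃ q : ℚ, (q : ℝ) = Real.sin θ1 / Real.sin θ2) ∧
        (∃ q : ℚ, (q : ℝ) = (Real.sin θ1 * Real.cos θ2 - Real.cos θ1 * Real.sin θ2)
          / Real.sin θ2))
      ↔ ((∃ q : ℚ, (q : ℝ) = Real.cos θ1) ∧ (∃ q : ℚ, (q : ℝ) = Real.cos θ2) ∧
          (∃ q : ℚ, (q : ℝ) = Real.sin θ1 / Real.sin θ2)) := by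
  have hs1 : 0 < Real.sin θ1 := Real.sin_pos_of_pos_of_lt_pi h1.1 h1.2
  have hs2 : 0 < Real.sin θ2 := Real.sin_pos_of_pos_of_lt_pi h2.1 h2.2
  have hs2' : Real.sin θ2 ≠ 0 := ne_of_gt hs2
  constructor
  · rintro ⟨⟨r, hr⟩, ⟨d, hd⟩⟩
    have hrpos : (0:ℝ) < r := by rw [hr]; positivity
    have hr0 : (r : ℚ) ≠ 0 := by exact_mod_cast (ne_of_gt (by exact_mod_cast hrpos : (0:ℝ) < (r:ℝ)))
    have hrs : (r:ℝ) * Real.sin θ2 = Real.sin θ1 := by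
      rw [hr]; field_simp
    have hd' : (d:ℝ) = (r:ℝ) * Real.cos θ2 - Real.cos θ1 := by
      rw [hd, ← hrs]; field_simp
    have p1 : Real.sin θ1 ^ 2 + Real.cos θ1 ^ 2 = 1 := Real.sin_sq_add_cos_sq θ1
    have p2 : Real.sin θ2 ^ 2 + Real.cos θ2 ^ 2 = 1 := Real.sin_sq_add_cos_sq θ2
    have key : (d:ℝ) * ((r:ℝ) * Real.cos θ2 + Real.cos θ1) = (r:ℝ)^2 - 1 := by
      rw [hd']; nlinarith [hrs]
    by_cases hdz : (d:ℚ) = 0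
    · exfalso
      have hd0 : (d:ℝ) = 0 := by exact_mod_cast hdz
      have hr2 : (r:ℝ)^2 = 1 := by rw [hd0] at key; linarith
      have hfac : ((r:ℝ) - 1) * ((r:ℝ) + 1) = 0 := by nlinarith
      have hr1 : (r:ℝ) = 1 := by
        rcases mul_eq_zero.mp hfac with h | h <;> linarith
      have hss : Real.sin θ1 = Real.sin θ2 := by rw [← hrs, hr1]; ring
      have hcc : Real.cos θ1 = Real.cos θ2 := by
        have := hd'; rw [hd0, hr1] at this; linarith
      exact hne (Real.injOn_cos ⟨le_of_lt h1.1, le_of_lt h1.2⟩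
        ⟨le_of_lt h2.1, le_of_lt h2.2⟩ hcc)
    · have hdz' : (d:ℝ) ≠ 0 := by exact_mod_cast hdz
      set q2 : ℚ := (r^2 - 1) / d with hq2def
      have hq2 : (q2:ℝ) = (r:ℝ) * Real.cos θ2 + Real.cos θ1 := by
        rw [hq2def]; push_cast
        rw [div_eq_iff hdz']
        linarith [key]
      refine ⟨⟨(q2 - d)/2, ?_⟩, ⟨(q2 + d)/(2*r), ?_⟩, ⟨r, hr⟩⟩
      · push_cast; rw [hq2, hd']; ring
      · push_cast
        rw [div_eq_iff (by positivity : (2:ℝ) * (r:ℝ) ≠ 0)]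
        rw [hq2, hd']; ring
  · rintro ⟨⟨a, ha⟩, ⟨b, hb⟩, ⟨r, hr⟩⟩
    refine ⟨⟨r, hr⟩, ⟨r * b - a, ?_⟩⟩
    have hrs : (r:ℝ) * Real.sin θ2 = Real.sin θ1 := by rw [hr]; field_simp
    push_cast
    rw [← ha, ← hb, eq_div_iff hs2', ← hrs]; ring
end

section
/- Let θ1, θ2 ∈ (0, π) with θ1 < θ2 and suppose θ1 + θ2 = π and r2 + r5 = 1/(4 sin² θ1) with r2, r5 > 0 and the induced r0, r1, r3, r4 all positive (as in the isotropy-order-2 parametrization). Then the inequality (sin(θ1−θ2))²·r2·r5 < (sin θ1)²·r0·r3 forces sin² θ1 > 3/4, i.e., θ1 ∈ (π/3, π/2). -/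
open Real Set

set_option maxHeartbeats 1600000 in
theorem stmt17 (θ1 θ2 : ℝ) (h1 : θ1 ∈ Ioo 0 π) (h2 : θ2 = π - θ1) (hlt : θ1 < θ2)
    (r2 r5 r0 r1 r3 r4 : ℝ) (hr2 : 0 < r2) (hr5' : 0 < r5)
    (hsum : r2 + r5 = 1 / (4 * Real.sin θ1 ^ 2))
    (hr4 : r4 = r2) (hr1 : r1 = r5)
    (hr0 : r0 = 1 / 2 - 1 / (4 * Real.sin θ1 ^ 2) - Real.cos θ1 / (4 * Real.sin θ1 ^ 2)
        + 2 * Real.cos θ1 * r2)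
    (hr3 : r3 = 1 / 2 - 1 / (4 * Real.sin θ1 ^ 2) + Real.cos θ1 / (4 * Real.sin θ1 ^ 2)
        - 2 * Real.cos θ1 * r2)
    (hr0pos : 0 < r0) (hr1pos : 0 < r1) (hr3pos : 0 < r3) (hr4pos : 0 < r4)
    (hineq : Real.sin (θ1 - θ2) ^ 2 * r2 * r5 < Real.sin θ1 ^ 2 * r0 * r3) :
    3 < 4 * Real.sin θ1 ^ 2 ∧ θ1 ∈ Ioo (π / 3) (π / 2) := by
  obtain ⟨hθ0, hθπ⟩ := h1
  have hs : 0 < Real.sin θ1 := Real.sin_pos_of_pos_of_lt_pi hθ0 hθπ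
  have hs2 : (0:ℝ) < Real.sin θ1 ^ 2 := by positivity
  have hhalf : θ1 < π / 2 := by rw [h2] at hlt; linarith
  have hsin2 : Real.sin (θ1 - θ2) ^ 2 = 4 * Real.sin θ1 ^ 2 * Real.cos θ1 ^ 2 := by
    rw [h2]
    have h : θ1 - (π - θ1) = -(π - 2 * θ1) := by ring
    rw [h, Real.sin_neg, Real.sin_pi_sub, Real.sin_two_mul]
    ring
  have hc2 : Real.cos θ1 ^ 2 = 1 - Real.sin θ1 ^ 2 := by
    nlinarith [Real.sin_sq_add_cos_sq θ1]
  have hu : 4 * Real.sin θ1 ^ 2 * (1 / (4 * Real.sin θ1 ^ 2)) = 1 := by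
    field_simp
  set u := 1 / (4 * Real.sin θ1 ^ 2) with hudef
  have hcu : Real.cos θ1 / (4 * Real.sin θ1 ^ 2) = Real.cos θ1 * u := by
    rw [hudef]; ring
  rw [hcu] at hr0 hr3
  have h5 : r5 = u - r2 := by linarith
  rw [hsin2, hr0, hr3, h5] at hineq
  have hupos : 0 < u := by rw [hudef]; positivity
  -- reduce to c² u² < (1/2 - u)²
  have key1 : Real.sin θ1 ^ 2 * (Real.cos θ1 ^ 2 * u ^ 2) <
      Real.sin θ1 ^ 2 * ((1 / 2 - u) ^ 2) := by nlinarith [hineq]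
  have key2 : Real.cos θ1 ^ 2 * u ^ 2 < (1 / 2 - u) ^ 2 :=
    lt_of_mul_lt_mul_left key1 (le_of_lt hs2)
  have hsu : 4 * Real.sin θ1 ^ 2 * u ^ 2 = u := by
    linear_combination u * hu
  have hu2 : 16 * (Real.sin θ1 ^ 2) ^ 2 * u ^ 2 = 1 := by
    linear_combination (4 * Real.sin θ1 ^ 2 * u + 1) * hu
  have hcu2 : Real.cos θ1 ^ 2 * u ^ 2 = u ^ 2 - Real.sin θ1 ^ 2 * u ^ 2 := by
    linear_combination u ^ 2 * hc2
  have hsu' : Real.sin θ1 ^ 2 * u ^ 2 = u / 4 := by linarith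
  have hu13 : u < 1 / 3 := by nlinarith [key2, hcu2, hsu', sq_nonneg u]
  have hkey : 3 < 4 * Real.sin θ1 ^ 2 := by
    nlinarith [mul_pos hs2 (show (0:ℝ) < 1 - 3 * u by linarith), hu]
  refine ⟨hkey, ?_, hhalf⟩
  have hsq3 : Real.sqrt 3 / 2 < Real.sin θ1 := by
    nlinarith [Real.sq_sqrt (show (0:ℝ) ≤ 3 by norm_num), Real.sqrt_nonneg 3, hs]
  by_contra hcon
  push_neg at hcon
  have hmono : Real.sin θ1 ≤ Real.sin (π / 3) := by
    apply Real.strictMonoOn_sin.monotoneOn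
    · constructor <;> [linarith [Real.pi_pos]; linarith]
    · constructor <;> [linarith [Real.pi_pos]; linarith [Real.pi_pos]]
    · exact hcon
  rw [Real.sin_pi_div_three] at hmono
  linarith
end
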